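/- arXiv:2409.19391 — 2 statements merged into one kernel-verified Lean document; each statement's English description precedes it below -/
import Mathlib

section
/- Fix a behavior policy ρ and target policy π in a finite MDP with bounded reward, discount γ ∈ [0,1), and n ≥ 1. Define the fitting error ε(s,u) = |Q̂(s,u) − Qπ(s,u)| where Q̂(s, π(s)) = max_u Q̂(s,u). Then the expected n-step TD error satisfies |E_ρ[𝒯_n(s_t,u_t)] − Qπ(s_t,u_t)| ≤ γ^n E_ρ[2ε(s_{t+n}, ρ(s_{t+n})) + ε(s_{t+n}, π(s_{t+n}))] + |Qρ(s_t,u_t) − Qπ(s_t,u_t)| + γ^n E_ρ[|Qπ(s_{t+n}, π(s_{t+n})) − Qρ(s_{t+n}, ρ(s_{t+n}))|], where 𝒯_n(s_t,u_t) = Σ_{k=0}^{n−1} γ^k r_{t+k} + γ^n max_u Q̂(s_{t+n}, u). -/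
/-- `stateDist P ρ s u k s'` is the probability that `s_{t+k+1} = s'` when starting
from `(s_t, u_t) = (s, u)` and thereafter following the deterministic policy `ρ`. -/
noncomputable def stateDist {S U : Type*} [Fintype S] (P : S → U → S → ℝ) (ρ : S → U)
    (s : S) (u : U) : ℕ → S → ℝ
  | 0 => P s u
  | (k + 1) => fun s'' => ∑ s', stateDist P ρ s u k s' * P s' (ρ s') s''

/-- Expected discounted reward `E_ρ[Σ_{k=0}^{n-1} γ^k r_{t+k}]` starting from `(s,u)`
and following `ρ` afterwards. -/
noncomputable def expReturn {S U : Type*} [Fintype S] (P : S → U → S → ℝ) (ρ : S → U)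
    (r : S → U → ℝ) (γ : ℝ) (s : S) (u : U) (n : ℕ) : ℝ :=
  r s u + ∑ k ∈ Finset.range (n - 1), γ ^ (k + 1) * ∑ s', stateDist P ρ s u k s' * r s' (ρ s')

lemma stateDist_nonneg {S U : Type*} [Fintype S] (P : S → U → S → ℝ) (ρ : S → U)
    (hP0 : ∀ s u s', 0 ≤ P s u s') (s : S) (u : U) :
    ∀ k s', 0 ≤ stateDist P ρ s u k s'
  | 0, s' => hP0 s u s'
  | (k+1), s'' => Finset.sum_nonneg fun s' _ =>
      mul_nonneg (stateDist_nonneg P ρ hP0 s u k s') (hP0 s' (ρ s') s'')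

lemma unroll {S U : Type*} [Fintype S] (γ : ℝ)
    (P : S → U → S → ℝ) (ρ : S → U) (r : S → U → ℝ) (Qρ : S → U → ℝ)
    (hBellρ : ∀ s u, Qρ s u = r s u + γ * ∑ s', P s u s' * Qρ s' (ρ s'))
    (s : S) (u : U) : ∀ n : ℕ,
    Qρ s u = expReturn P ρ r γ s u (n+1)
      + γ ^ (n+1) * ∑ s', stateDist P ρ s u n s' * Qρ s' (ρ s') := by
  intro n
  induction n with
  | zero =>
      simp only [expReturn, Nat.add_sub_cancel, Finset.range_zero, Finset.sum_empty,
        add_zero, pow_one, stateDist]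
      rw [hBellρ s u, pow_one]
  | succ n ih =>
      rw [ih]
      have hstep : ∑ s', stateDist P ρ s u n s' * Qρ s' (ρ s')
          = (∑ s', stateDist P ρ s u n s' * r s' (ρ s'))
            + γ * ∑ s'', stateDist P ρ s u (n+1) s'' * Qρ s'' (ρ s'') := by
        calc ∑ s', stateDist P ρ s u n s' * Qρ s' (ρ s')
            = ∑ s', stateDist P ρ s u n s' *
                (r s' (ρ s') + γ * ∑ s'', P s' (ρ s') s'' * Qρ s'' (ρ s'')) := by
              refine Finset.sum_congr rfl fun s' _ => by rw [← hBellρ]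
          _ = (∑ s', stateDist P ρ s u n s' * r s' (ρ s'))
              + γ * ∑ s', ∑ s'', stateDist P ρ s u n s' * (P s' (ρ s') s'' * Qρ s'' (ρ s'')) := by
              rw [Finset.mul_sum, ← Finset.sum_add_distrib]
              refine Finset.sum_congr rfl fun s' _ => ?_
              rw [Finset.mul_sum, Finset.mul_sum, mul_add]
              congr 1
              · rw [Finset.mul_sum]
                exact Finset.sum_congr rfl fun s'' _ => by ring
          _ = (∑ s', stateDist P ρ s u n s' * r s' (ρ s'))
              + γ * ∑ s'', stateDist P ρ s u (n+1) s'' * Qρ s'' (ρ s'') := by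
              congr 1
              rw [Finset.sum_comm]
              refine congrArg _ (Finset.sum_congr rfl fun s'' _ => ?_)
              show (∑ s', stateDist P ρ s u n s' * (P s' (ρ s') s'' * Qρ s'' (ρ s'')))
                = stateDist P ρ s u (n+1) s'' * Qρ s'' (ρ s'')
              simp only [stateDist, Finset.sum_mul]
              exact Finset.sum_congr rfl fun s' _ => by ring
      rw [hstep]
      simp only [expReturn, Nat.add_sub_cancel]
      rw [Finset.sum_range_succ]
      ring
/-- Theorem 1: bound on the expected n-step TD error under a sparse value estimate. -/
theorem expected_nstep_td_error_bound {S U : Type*} [Fintype S] [Fintype U] [Nonempty U]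
    (γ : ℝ) (hγ0 : 0 ≤ γ) (hγ1 : γ < 1)
    (P : S → U → S → ℝ) (hP0 : ∀ s u s', 0 ≤ P s u s') (hP1 : ∀ s u, ∑ s', P s u s' = 1)
    (ρ π : S → U) (r : S → U → ℝ) (Qρ Qπ Qhat : S → U → ℝ)
    (hBellρ : ∀ s u, Qρ s u = r s u + γ * ∑ s', P s u s' * Qρ s' (ρ s'))
    (hBellπ : ∀ s u, Qπ s u = r s u + γ * ∑ s', P s u s' * Qπ s' (π s'))
    (hgreedy : ∀ s u, Qhat s u ≤ Qhat s (π s))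
    (n : ℕ) (hn : 1 ≤ n) (s : S) (u : U) :
    |expReturn P ρ r γ s u n
        + γ ^ n * (∑ s', stateDist P ρ s u (n - 1) s'
            * Finset.univ.sup' Finset.univ_nonempty (Qhat s'))
        - Qπ s u|
      ≤ γ ^ n * (∑ s', stateDist P ρ s u (n - 1) s'
            * (2 * |Qhat s' (ρ s') - Qπ s' (ρ s')| + |Qhat s' (π s') - Qπ s' (π s')|))
        + |Qρ s u - Qπ s u|
        + γ ^ n * (∑ s', stateDist P ρ s u (n - 1) s'
            * |Qπ s' (π s') - Qρ s' (ρ s')|) := by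
  obtain ⟨m, rfl⟩ : ∃ m, n = m + 1 := ⟨n - 1, (Nat.succ_pred_eq_of_pos hn).symm⟩
  have key := unroll γ P ρ r Qρ hBellρ s u m
  have hM : ∀ s' : S, Finset.univ.sup' Finset.univ_nonempty (Qhat s') = Qhat s' (π s') :=
    fun s' => le_antisymm (Finset.sup'_le _ _ fun v _ => hgreedy s' v)
      (Finset.le_sup' _ (Finset.mem_univ _))
  simp only [Nat.add_sub_cancel, hM]
  set d := stateDist P ρ s u m with hd
  have hdnn : ∀ s', 0 ≤ d s' := fun s' => stateDist_nonneg P ρ hP0 s u m s'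
  have hgn : (0:ℝ) ≤ γ ^ (m+1) := pow_nonneg hγ0 _
  have e1 : expReturn P ρ r γ s u (m+1)
      + γ ^ (m+1) * (∑ s', d s' * Qhat s' (π s')) - Qπ s u
      = γ ^ (m+1) * (∑ s', d s' * (Qhat s' (π s') - Qρ s' (ρ s'))) + (Qρ s u - Qπ s u) := by
    have h2 : ∑ s', d s' * (Qhat s' (π s') - Qρ s' (ρ s'))
        = (∑ s', d s' * Qhat s' (π s')) - ∑ s', d s' * Qρ s' (ρ s') := by
      rw [← Finset.sum_sub_distrib]
      exact Finset.sum_congr rfl fun s' _ => mul_sub _ _ _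
    rw [h2, mul_sub]
    linarith [key]
  rw [e1]
  have hper : ∀ s', |Qhat s' (π s') - Qρ s' (ρ s')|
      ≤ (2 * |Qhat s' (ρ s') - Qπ s' (ρ s')| + |Qhat s' (π s') - Qπ s' (π s')|)
        + |Qπ s' (π s') - Qρ s' (ρ s')| := fun s' => by
    have h1 : |Qhat s' (π s') - Qρ s' (ρ s')|
        ≤ |Qhat s' (π s') - Qπ s' (π s')| + |Qπ s' (π s') - Qρ s' (ρ s')| :=
      abs_sub_le _ _ _
    have h0 : (0:ℝ) ≤ |Qhat s' (ρ s') - Qπ s' (ρ s')| := abs_nonneg _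
    linarith
  have hsum : |∑ s', d s' * (Qhat s' (π s') - Qρ s' (ρ s'))|
      ≤ (∑ s', d s' * (2 * |Qhat s' (ρ s') - Qπ s' (ρ s')| + |Qhat s' (π s') - Qπ s' (π s')|))
        + ∑ s', d s' * |Qπ s' (π s') - Qρ s' (ρ s')| := by
    calc |∑ s', d s' * (Qhat s' (π s') - Qρ s' (ρ s'))|
        ≤ ∑ s', |d s' * (Qhat s' (π s') - Qρ s' (ρ s'))| := Finset.abs_sum_le_sum_abs _ _
      _ = ∑ s', d s' * |Qhat s' (π s') - Qρ s' (ρ s')| := by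
          refine Finset.sum_congr rfl fun s' _ => ?_
          rw [abs_mul, abs_of_nonneg (hdnn s')]
      _ ≤ ∑ s', d s' * ((2 * |Qhat s' (ρ s') - Qπ s' (ρ s')| + |Qhat s' (π s') - Qπ s' (π s')|)
            + |Qπ s' (π s') - Qρ s' (ρ s')|) := by
          refine Finset.sum_le_sum fun s' _ => mul_le_mul_of_nonneg_left (hper s') (hdnn s')
      _ = _ := by
          rw [← Finset.sum_add_distrib]
          exact Finset.sum_congr rfl fun s' _ => mul_add _ _ _
  calc |γ ^ (m+1) * (∑ s', d s' * (Qhat s' (π s') - Qρ s' (ρ s'))) + (Qρ s u - Qπ s u)|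
      ≤ |γ ^ (m+1) * (∑ s', d s' * (Qhat s' (π s') - Qρ s' (ρ s')))| + |Qρ s u - Qπ s u| :=
        abs_add_le _ _
    _ = γ ^ (m+1) * |∑ s', d s' * (Qhat s' (π s') - Qρ s' (ρ s'))| + |Qρ s u - Qπ s u| := by
        rw [abs_mul, abs_of_nonneg hgn]
    _ ≤ _ := by
        have := mul_le_mul_of_nonneg_left hsum hgn
        rw [mul_add] at this
        linarith
end

section
/- Let U be a nonempty finite set and Q : U → ℝ with max Q − min Q = R. Then for ω > 0 and α ∈ ℝ, the gap between the max operator and the Soft Mellowmax operator sm_ω (with α-softmax weights) satisfies 0 ≤ max_u Q(u) − sm_ω(Q) ≤ (1/ω)·(log|U| + |α|·R). -/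
theorem max_sub_softMellowmax_bound {U : Type*} [Fintype U] [Nonempty U]
    (ω α : ℝ) (hω : 0 < ω) (Q : U → ℝ) :
    0 ≤ Finset.univ.sup' Finset.univ_nonempty Q
        - (1 / ω) * Real.log (∑ u, (Real.exp (α * Q u) / ∑ u', Real.exp (α * Q u'))
            * Real.exp (ω * Q u))
      ∧ Finset.univ.sup' Finset.univ_nonempty Q
        - (1 / ω) * Real.log (∑ u, (Real.exp (α * Q u) / ∑ u', Real.exp (α * Q u'))
            * Real.exp (ω * Q u))
        ≤ (1 / ω) * (Real.log (Fintype.card U)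
            + |α| * (Finset.univ.sup' Finset.univ_nonempty Q
                - Finset.univ.inf' Finset.univ_nonempty Q)) := by
  set M := Finset.univ.sup' Finset.univ_nonempty Q with hM
  set m := Finset.univ.inf' Finset.univ_nonempty Q with hm
  set S := ∑ u' : U, Real.exp (α * Q u') with hS
  have hSpos : 0 < S := Finset.sum_pos (fun u _ => Real.exp_pos _) Finset.univ_nonempty
  set T := ∑ u : U, (Real.exp (α * Q u) / S) * Real.exp (ω * Q u) with hT
  have hTpos : 0 < T :=
    Finset.sum_pos (fun u _ => mul_pos (div_pos (Real.exp_pos _) hSpos) (Real.exp_pos _))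
      Finset.univ_nonempty
  obtain ⟨u0, -, hu0⟩ := Finset.exists_mem_eq_sup' (Finset.univ_nonempty (α := U)) Q
  have hQM : ∀ u : U, Q u ≤ M := fun u => Finset.le_sup' Q (Finset.mem_univ u)
  have hmQ : ∀ u : U, m ≤ Q u := fun u => Finset.inf'_le Q (Finset.mem_univ u)
  have hmM : m ≤ M := le_trans (hmQ (Classical.arbitrary U)) (hQM _)
  have hcard : (0 : ℝ) < Fintype.card U := by
    exact_mod_cast Fintype.card_pos
  -- Upper bound on T : T ≤ exp (ω * M)
  have hTle : T ≤ Real.exp (ω * M) := by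
    have : T ≤ ∑ u : U, (Real.exp (α * Q u) / S) * Real.exp (ω * M) := by
      apply Finset.sum_le_sum
      intro u _
      exact mul_le_mul_of_nonneg_left
        (Real.exp_le_exp.mpr (mul_le_mul_of_nonneg_left (hQM u) hω.le))
        (div_pos (Real.exp_pos _) hSpos).le
    calc T ≤ ∑ u : U, (Real.exp (α * Q u) / S) * Real.exp (ω * M) := this
      _ = (∑ u : U, Real.exp (α * Q u) / S) * Real.exp (ω * M) := by
          rw [Finset.sum_mul]
      _ = Real.exp (ω * M) := by
          rw [← Finset.sum_div, ← hS, div_self hSpos.ne', one_mul]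
  -- Lower bound on S's terms: S ≤ card * exp (α*M + |α|*(M-m))
  have hSle : S ≤ (Fintype.card U : ℝ) * Real.exp (α * M + |α| * (M - m)) := by
    have : S ≤ ∑ _u : U, Real.exp (α * M + |α| * (M - m)) := by
      apply Finset.sum_le_sum
      intro u _
      apply Real.exp_le_exp.mpr
      have h1 : α * Q u - α * M ≤ |α| * (M - m) := by
        have : α * Q u - α * M = α * (Q u - M) := by ring
        rw [this]
        calc α * (Q u - M) ≤ |α * (Q u - M)| := le_abs_self _
          _ = |α| * |Q u - M| := abs_mul _ _
          _ ≤ |α| * (M - m) := by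
              apply mul_le_mul_of_nonneg_left _ (abs_nonneg α)
              rw [abs_le]
              constructor
              · linarith [hmQ u]
              · linarith [hQM u]
      linarith
    simpa [Finset.sum_const, nsmul_eq_mul] using this
  -- Lower bound on T: single term at u0
  have hTge : Real.exp (ω * M - |α| * (M - m)) / (Fintype.card U : ℝ) ≤ T := by
    have hterm : (Real.exp (α * Q u0) / S) * Real.exp (ω * Q u0) ≤ T := by
      apply Finset.single_le_sum (f := fun u => (Real.exp (α * Q u) / S) * Real.exp (ω * Q u))
        (fun u _ => (mul_pos (div_pos (Real.exp_pos _) hSpos) (Real.exp_pos _)).le)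
        (Finset.mem_univ u0)
    refine le_trans ?_ hterm
    rw [← hu0]
    rw [div_mul_eq_mul_div, div_le_div_iff₀ hcard hSpos]
    calc Real.exp (ω * M - |α| * (M - m)) * S
        ≤ Real.exp (ω * M - |α| * (M - m)) *
            ((Fintype.card U : ℝ) * Real.exp (α * M + |α| * (M - m))) :=
          mul_le_mul_of_nonneg_left hSle (Real.exp_pos _).le
      _ = Real.exp (α * M) * Real.exp (ω * M) * (Fintype.card U : ℝ) := by
          rw [mul_left_comm, ← Real.exp_add, ← Real.exp_add, mul_comm]
          congr 2
          ring
  have hlogle : Real.log T ≤ ω * M := by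
    calc Real.log T ≤ Real.log (Real.exp (ω * M)) := Real.log_le_log hTpos hTle
      _ = ω * M := Real.log_exp _
  have hlogge : ω * M - |α| * (M - m) - Real.log (Fintype.card U) ≤ Real.log T := by
    have := Real.log_le_log (div_pos (Real.exp_pos _) hcard) hTge
    rwa [Real.log_div (Real.exp_pos _).ne' hcard.ne', Real.log_exp] at this
  constructor
  · have : (1 / ω) * Real.log T ≤ (1 / ω) * (ω * M) :=
      mul_le_mul_of_nonneg_left hlogle (by positivity)
    rw [one_div, inv_mul_cancel_left₀ hω.ne'] at this
    rw [one_div]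
    linarith
  · have h1 : (1 / ω) * (ω * M - |α| * (M - m) - Real.log (Fintype.card U))
        ≤ (1 / ω) * Real.log T :=
      mul_le_mul_of_nonneg_left hlogge (by positivity)
    have h2 : (1 / ω) * (ω * M - |α| * (M - m) - Real.log (Fintype.card U))
        = M - (1 / ω) * (Real.log (Fintype.card U) + |α| * (M - m)) := by
      field_simp
      ring
    linarith
end
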